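/- Let gamma_1, ..., gamma_n be independent Bernoulli(pi) random variables, and let M be an n x n real matrix with entries m_{ij} and spectral norm ||M||_2. Fix a subset Lambda of [n]. Then for any 0 < s < 1/(2*||M||_2^2), E[exp(s * sum_{i in Lambda} sum_{j not in Lambda} gamma_j * m_{ij}^2)] <= exp(2 * s * pi * sum_{i != j} m_{ij}^2). -/

import Mathlib

/-!
Swapping the two sums writes the exponent as `∑_{j ∉ Λ} a_j γ_j` with `a_j = ∑_{i ∈ Λ} m_ij²`, a
sum of independent terms, so the MGF factors into Bernoulli MGFs `1 + (exp (s a_j) - 1) π`.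
Each `a_j` is at most the squared norm of the `j`-th column, hence at most `‖M‖²`, so `s a_j ≤ 1/2`
and `exp (s a_j) ≤ 1 + 2 s a_j`; thus each factor is at most `exp (2 s π a_j)`. Finally
`∑_{j ∉ Λ} a_j` only involves off-diagonal entries of `M`.
-/

open MeasureTheory ProbabilityTheory

theorem Matrix.sum_sq_apply_le_toEuclideanCLM_norm_sq {n : Type*} [Fintype n] [DecidableEq n]
    (M : Matrix n n ℝ) (Λ : Finset n) (j : n) :
    ∑ i ∈ Λ, M i j ^ 2 ≤ ‖Matrix.toEuclideanCLM (𝕜 := ℝ) M‖ ^ 2 := by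
  have hle := (Matrix.toEuclideanCLM (𝕜 := ℝ) M).le_opNorm (WithLp.toLp 2 (Pi.single j 1))
  rw [Matrix.toEuclideanCLM_toLp, Matrix.mulVec_single_one, PiLp.toLp_single, PiLp.norm_single,
    norm_one, mul_one] at hle
  calc ∑ i ∈ Λ, M i j ^ 2 ≤ ∑ i, M i j ^ 2 :=
        Finset.sum_le_sum_of_subset_of_nonneg (Finset.subset_univ Λ) fun i _ _ => sq_nonneg _
    _ = ‖WithLp.toLp 2 (M.col j)‖ ^ 2 := by simp [EuclideanSpace.norm_sq_eq]
    _ ≤ _ := by gcongr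

theorem mul_le_half_of_lt_one_div_two_mul {s c : ℝ} (hc : 0 ≤ c) (hs : s < 1 / (2 * c)) :
    s * c ≤ 1 / 2 := by
  rcases hc.eq_or_lt with rfl | hc
  · norm_num
  · rw [lt_div_iff₀ (by positivity)] at hs; linarith

theorem Real.exp_le_one_add_two_mul {x : ℝ} (hx0 : 0 ≤ x) (hx : x ≤ 1 / 2) :
    Real.exp x ≤ 1 + 2 * x := by
  have hpos : 0 < 1 - x := by linarith
  calc Real.exp x ≤ 1 / (1 - x) := Real.exp_bound_div_one_sub_of_interval hx0 (by linarith)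
    _ ≤ 1 + 2 * x := by rw [div_le_iff₀ hpos]; nlinarith

theorem one_add_exp_sub_one_mul_le_exp {t p : ℝ} (ht0 : 0 ≤ t) (ht : t ≤ 1 / 2) (hp : 0 ≤ p) :
    1 + (Real.exp t - 1) * p ≤ Real.exp (2 * t * p) := by
  have := Real.exp_le_one_add_two_mul ht0 ht
  calc 1 + (Real.exp t - 1) * p ≤ 2 * t * p + 1 := by nlinarith
    _ ≤ Real.exp (2 * t * p) := Real.add_one_le_exp _

theorem mgf_of_zero_or_one {Ω : Type*} [MeasurableSpace Ω] {μ : Measure Ω} [IsProbabilityMeasure μ]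
    {X : Ω → ℝ} (hX : Measurable X) (h01 : ∀ ω, X ω = 0 ∨ X ω = 1) (t : ℝ) :
    mgf X μ t = 1 + (Real.exp t - 1) * μ.real {ω | X ω = 1} := by
  have hA : MeasurableSet {ω | X ω = 1} := hX (measurableSet_singleton 1)
  have hexp : (fun ω => Real.exp (t * X ω)) =
      fun ω => 1 + (Real.exp t - 1) * {ω | X ω = 1}.indicator 1 ω := by
    funext ω
    rcases h01 ω with h | h <;> simp [h]
  rw [mgf, hexp, integral_add (integrable_const 1) ((integrable_indicator_iff hA).2
      (integrable_const 1).integrableOn |>.const_mul _), integral_const_mul,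
    integral_indicator_one hA]
  simp

theorem mgf_le_exp_of_zero_or_one {Ω : Type*} [MeasurableSpace Ω] {μ : Measure Ω}
    [IsProbabilityMeasure μ] {X : Ω → ℝ} (hX : Measurable X) (h01 : ∀ ω, X ω = 0 ∨ X ω = 1)
    {t : ℝ} (ht0 : 0 ≤ t) (ht : t ≤ 1 / 2) :
    mgf X μ t ≤ Real.exp (2 * t * μ.real {ω | X ω = 1}) := by
  rw [mgf_of_zero_or_one hX h01]
  exact one_add_exp_sub_one_mul_le_exp ht0 ht measureReal_nonneg

theorem Finset.sum_sum_compl_le_sum_sum_compl_singleton {ι : Type*} [Fintype ι] [DecidableEq ι]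
    (Λ : Finset ι) {f : ι → ι → ℝ} (hf : ∀ i j, 0 ≤ f i j) :
    ∑ i ∈ Λ, ∑ j ∈ Λᶜ, f i j ≤ ∑ i, ∑ j ∈ {i}ᶜ, f i j := by
  refine (Finset.sum_le_sum fun i hi => ?_).trans
    (Finset.sum_le_sum_of_subset_of_nonneg (Finset.subset_univ Λ)
      fun i _ _ => Finset.sum_nonneg fun j _ => hf i j)
  refine Finset.sum_le_sum_of_subset_of_nonneg (fun j hj => ?_) fun j _ _ => hf i j
  simp only [Finset.mem_compl, Finset.mem_singleton] at hj ⊢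
  rintro rfl
  exact hj hi

theorem bernoulli_mask_mgf_bound_general {Ω : Type*} [MeasurableSpace Ω]
    (μ : Measure Ω) [IsProbabilityMeasure μ]
    (n : ℕ) (γ : Fin n → Ω → ℝ) (π : ℝ) (hπ0 : 0 ≤ π)
    (hmeas : ∀ j, Measurable (γ j))
    (h01 : ∀ j ω, γ j ω = 0 ∨ γ j ω = 1)
    (hber : ∀ j, μ {ω | γ j ω = 1} = ENNReal.ofReal π)
    (hindep : iIndepFun γ μ)
    (M : Matrix (Fin n) (Fin n) ℝ) (Λ : Finset (Fin n))
    (s : ℝ) (hs0 : 0 < s)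
    (hs : s < 1 / (2 * ‖Matrix.toEuclideanCLM (𝕜 := ℝ) M‖ ^ 2)) :
    ∫ ω, Real.exp (s * ∑ i ∈ Λ, ∑ j ∈ Λᶜ, γ j ω * M i j ^ 2) ∂μ
      ≤ Real.exp (2 * s * π * ∑ i, ∑ j ∈ ({i}ᶜ : Finset (Fin n)), M i j ^ 2) := by
  let a : Fin n → ℝ := fun j => ∑ i ∈ Λ, M i j ^ 2
  have hsa : ∀ j, s * a j ≤ 1 / 2 := fun j =>
    (mul_le_mul_of_nonneg_left (M.sum_sq_apply_le_toEuclideanCLM_norm_sq Λ j) hs0.le).trans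
      (mul_le_half_of_lt_one_div_two_mul (sq_nonneg _) hs)
  have hsum : (fun ω => ∑ i ∈ Λ, ∑ j ∈ Λᶜ, γ j ω * M i j ^ 2) =
      ∑ j ∈ Λᶜ, fun ω => a j * γ j ω := by
    ext ω
    simp only [Finset.sum_apply, Finset.sum_mul, a]
    rw [Finset.sum_comm]
    simp only [mul_comm]
  calc ∫ ω, Real.exp (s * ∑ i ∈ Λ, ∑ j ∈ Λᶜ, γ j ω * M i j ^ 2) ∂μ
      = ∏ j ∈ Λᶜ, mgf (γ j) μ (a j * s) := by
        have hX : iIndepFun (fun j ω => a j * γ j ω) μ :=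
          hindep.comp (fun j x => a j * x) fun j => measurable_const.mul measurable_id
        rw [← mgf, hsum, hX.mgf_sum fun j => measurable_const.mul (hmeas j)]
        simp only [mgf_const_mul]
    _ ≤ ∏ j ∈ Λᶜ, Real.exp (2 * s * π * a j) := Finset.prod_le_prod (fun j _ => mgf_nonneg)
        fun j _ => by
          rw [show 2 * s * π * a j = 2 * (a j * s) * μ.real {ω | γ j ω = 1} by
            rw [measureReal_def, hber j, ENNReal.toReal_ofReal hπ0]; ring]
          exact mgf_le_exp_of_zero_or_one (hmeas j) (h01 j) (by positivity) (by linarith [hsa j])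
    _ ≤ _ := by
        rw [← Real.exp_sum, Real.exp_le_exp, ← Finset.mul_sum, Finset.sum_comm]
        exact mul_le_mul_of_nonneg_left
          (Finset.sum_sum_compl_le_sum_sum_compl_singleton Λ fun i j => sq_nonneg _) (by positivity)

/-- MGF bound for a Bernoulli-masked sum of squared matrix entries. -/
theorem bernoulli_mask_mgf_bound {Ω : Type*} [MeasurableSpace Ω]
    (μ : Measure Ω) [IsProbabilityMeasure μ]
    (n : ℕ) (γ : Fin n → Ω → ℝ) (π : ℝ) (hπ0 : 0 ≤ π) (hπ1 : π ≤ 1)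
    (hmeas : ∀ j, Measurable (γ j))
    (h01 : ∀ j ω, γ j ω = 0 ∨ γ j ω = 1)
    (hber : ∀ j, μ {ω | γ j ω = 1} = ENNReal.ofReal π)
    (hindep : iIndepFun γ μ)
    (M : Matrix (Fin n) (Fin n) ℝ) (Λ : Finset (Fin n))
    (s : ℝ) (hs0 : 0 < s)
    (hs : s < 1 / (2 * ‖Matrix.toEuclideanCLM (𝕜 := ℝ) M‖ ^ 2)) :
    ∫ ω, Real.exp (s * ∑ i ∈ Λ, ∑ j ∈ Λᶜ, γ j ω * M i j ^ 2) ∂μ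
      ≤ Real.exp (2 * s * π * ∑ i, ∑ j ∈ ({i}ᶜ : Finset (Fin n)), M i j ^ 2) :=
  bernoulli_mask_mgf_bound_general μ n γ π hπ0 hmeas h01 hber hindep M Λ s hs0 hs
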